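/- Let Γ be a countable discrete group and μ an admissible probability measure on Γ, with Green function G(x,y|r) and radius of convergence R. Define inductively F₁(x,y|r) = d/dr (r·G(x,y|r)) and F_{k+1}(x,y|r) = d/dr (r²·F_k(x,y|r)). Then for every integer k ≥ 1, all x, y ∈ Γ and all 0 < r < R, one has F_k(x,y|r) = k!·r^{k-1}·I^{(k)}(x,y|r). -/

import Mathlib

open Filter Topology

/-- The `n`-fold convolution power of `μ` (`convPow μ 0` is the point mass at the identity). -/
noncomputable def convPow {Γ : Type*} [Group Γ] (μ : Γ → ℝ) : ℕ → Γ → ℝ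
  | 0 => fun g => by classical exact if g = (1 : Γ) then (1 : ℝ) else 0
  | n + 1 => fun g => ∑' h : Γ, μ h * convPow μ n (h⁻¹ * g)

/-- The `n`-step transition probabilities `P^n(x,y) = μ^{*n}(x⁻¹y)`. -/
noncomputable def stepProb {Γ : Type*} [Group Γ] (μ : Γ → ℝ) (n : ℕ) (x y : Γ) : ℝ :=
  convPow μ n (x⁻¹ * y)

/-- `μ` is a probability measure on `Γ`: nonnegative with total mass one. -/
def IsProbMeasure {Γ : Type*} [Group Γ] (μ : Γ → ℝ) : Prop :=
  (∀ g, 0 ≤ μ g) ∧ HasSum μ 1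

/-- `μ` is admissible: its support generates `Γ` as a semigroup. -/
def Admissible {Γ : Type*} [Group Γ] (μ : Γ → ℝ) : Prop :=
  Subsemigroup.closure {g : Γ | 0 < μ g} = ⊤

/-- `μ` is aperiodic: `μ^{*n}(e) > 0` for all sufficiently large `n`. -/
def RWAperiodic {Γ : Type*} [Group Γ] (μ : Γ → ℝ) : Prop :=
  ∃ n₀ : ℕ, ∀ n ≥ n₀, 0 < convPow μ n 1

/-- `μ` is symmetric: `μ(g) = μ(g⁻¹)`. -/
def RWSymmetric {Γ : Type*} [Group Γ] (μ : Γ → ℝ) : Prop :=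
  ∀ g : Γ, μ g⁻¹ = μ g

/-- `μ` is finitely supported. -/
def FinSupported {Γ : Type*} [Group Γ] (μ : Γ → ℝ) : Prop :=
  {g : Γ | 0 < μ g}.Finite

/-- The Green function `G(x,y|r) = Σ_{n≥0} P^n(x,y) rⁿ`. -/
noncomputable def Green {Γ : Type*} [Group Γ] (μ : Γ → ℝ) (x y : Γ) (r : ℝ) : ℝ :=
  ∑' n : ℕ, stepProb μ n x y * r ^ n

/-- The common radius of convergence `R = (limsup_n P^n(e,e)^{1/n})⁻¹` of the Green function. -/
noncomputable def greenRadius {Γ : Type*} [Group Γ] (μ : Γ → ℝ) : ℝ :=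
  (Filter.limsup (fun n : ℕ => (convPow μ n 1) ^ ((n : ℝ)⁻¹)) Filter.atTop)⁻¹

/-- The iterated Green sums: `greenIter μ 0 = G` and for `s ≥ 1`,
`I^{(s)}(x,y|r) = Σ_{x₁,…,x_s} G(x,x₁|r) G(x₁,x₂|r) ⋯ G(x_s,y|r)`. -/
noncomputable def greenIter {Γ : Type*} [Group Γ] (μ : Γ → ℝ) : ℕ → Γ → Γ → ℝ → ℝ
  | 0 => fun x y r => Green μ x y r
  | s + 1 => fun x y r => ∑' z : Γ, Green μ x z r * greenIter μ s z y r

/-- `greenF μ x y (k-1)` is the function `F_k(x,y|·)` defined inductively by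
`F₁(x,y|r) = d/dr (r · G(x,y|r))` and `F_{k+1}(x,y|r) = d/dr (r² · F_k(x,y|r))`. -/
noncomputable def greenF {Γ : Type*} [Group Γ] (μ : Γ → ℝ) (x y : Γ) : ℕ → ℝ → ℝ
  | 0 => deriv (fun r : ℝ => r * Green μ x y r)
  | k + 1 => deriv (fun r : ℝ => r ^ 2 * greenF μ x y k r)

set_option linter.unusedSectionVars false
open scoped ENNReal NNReal

section RW
variable {Γ : Type*} [Group Γ] [Countable Γ] {μ : Γ → ℝ} (hprob : IsProbMeasure μ)

include hprob

lemma convPow_nonneg (n : ℕ) (g : Γ) : 0 ≤ convPow μ n g := by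
  induction n generalizing g with
  | zero =>
      classical
      show (0:ℝ) ≤ if g = (1:Γ) then (1:ℝ) else 0
      split <;> norm_num
  | succ n ih => exact tsum_nonneg fun h => mul_nonneg (hprob.1 h) (ih _)

lemma convPow_hasSum (n : ℕ) : HasSum (convPow μ n) (1 : ℝ) := by
  induction n with
  | zero =>
      classical
      have : (convPow μ 0 : Γ → ℝ) = fun g => if g = (1:Γ) then (1:ℝ) else 0 := by
        funext g; rfl
      rw [this]
      simpa using hasSum_ite_eq (1 : Γ) (1 : ℝ)
  | succ n ihs =>
      classical
      have hnn : ∀ g, 0 ≤ convPow μ n g := convPow_nonneg hprob n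
      have hle1 : ∀ g, convPow μ n g ≤ 1 := fun g =>
        le_hasSum ihs g fun j _ => hnn j
      set F : Γ × Γ → ℝ := fun p => μ p.1 * convPow μ n (p.1⁻¹ * p.2) with hF
      have h2 : 0 ≤ F := fun p => mul_nonneg (hprob.1 p.1) (hnn _)
      have hrow : ∀ h : Γ, HasSum (fun g => μ h * convPow μ n (h⁻¹ * g)) (μ h) := by
        intro h
        have := ((Equiv.mulLeft h⁻¹).hasSum_iff (f := convPow μ n)).2 ihs
        have := this.mul_left (μ h)
        simpa using this
      have hsummable : Summable F := by
        refine (summable_prod_of_nonneg h2).2 ⟨fun h => (hrow h).summable, ?_⟩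
        refine (summable_congr (fun h => ?_)).2 hprob.2.summable
        exact (hrow h).tsum_eq
      have htot : HasSum F 1 := by
        have := hsummable.hasSum
        rwa [Summable.tsum_prod' hsummable (fun b => hsummable.prod_factor b), tsum_congr (fun h => (hrow h).tsum_eq),
          hprob.2.tsum_eq] at this
      have hswap : HasSum (fun p : Γ × Γ => F p.swap) 1 :=
        ((Equiv.prodComm Γ Γ).hasSum_iff).2 htot
      have hfib : ∀ g : Γ, HasSum (fun h => F (h, g)) (convPow μ (n+1) g) := by
        intro g
        have hs : Summable (fun h => F (h, g)) := hswap.summable.prod_factor g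
        exact hs.hasSum
      exact hswap.prod_fiberwise hfib

lemma convPow_le_one (n : ℕ) (g : Γ) : convPow μ n g ≤ 1 :=
  le_hasSum (convPow_hasSum hprob n) g fun j _ => convPow_nonneg hprob n j

lemma summable_mu_mul (n : ℕ) (g : Γ) :
    Summable fun h : Γ => μ h * convPow μ n (h⁻¹ * g) := by
  refine Summable.of_nonneg_of_le (fun h => mul_nonneg (hprob.1 h) (convPow_nonneg hprob n _))
    (fun h => ?_) hprob.2.summable
  calc μ h * convPow μ n (h⁻¹ * g) ≤ μ h * 1 :=
        mul_le_mul_of_nonneg_left (convPow_le_one hprob n _) (hprob.1 h)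
    _ = μ h := mul_one _

lemma convPow_one_eq (g : Γ) : convPow μ 1 g = μ g := by
  classical
  have : (convPow μ 1 g : ℝ) = ∑' h : Γ, μ h * convPow μ 0 (h⁻¹ * g) := rfl
  rw [this]
  have h0 : ∀ h : Γ, μ h * convPow μ 0 (h⁻¹ * g) = if h = g then μ g else 0 := by
    intro h
    show μ h * (if h⁻¹ * g = 1 then (1:ℝ) else 0) = _
    simp only [inv_mul_eq_one]
    by_cases hh : h = g
    · subst hh; simp
    · simp [hh]
  rw [tsum_congr h0]
  exact tsum_ite_eq g (fun _ => μ g)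

open ENNReal in
lemma qrec (n : ℕ) (g : Γ) :
    ENNReal.ofReal (convPow μ (n+1) g)
      = ∑' h : Γ, ENNReal.ofReal (μ h) * ENNReal.ofReal (convPow μ n (h⁻¹ * g)) := by
  rw [show convPow μ (n+1) g = ∑' h : Γ, μ h * convPow μ n (h⁻¹ * g) from rfl,
    ENNReal.ofReal_tsum_of_nonneg
      (fun h => mul_nonneg (hprob.1 h) (convPow_nonneg hprob n _))
      (summable_mu_mul hprob n g)]
  exact tsum_congr fun h => ENNReal.ofReal_mul (hprob.1 h)

lemma qchapman (m n : ℕ) (g : Γ) :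
    ENNReal.ofReal (convPow μ (m+n) g)
      = ∑' h : Γ, ENNReal.ofReal (convPow μ m h) * ENNReal.ofReal (convPow μ n (h⁻¹ * g)) := by
  classical
  induction m generalizing g with
  | zero =>
      rw [zero_add]
      symm
      rw [tsum_eq_single (1 : Γ)]
      · simp [show convPow μ 0 (1:Γ) = (if (1:Γ) = 1 then (1:ℝ) else 0) from rfl]
      · intro b hb
        have : convPow μ 0 b = 0 := by
          show (if b = (1:Γ) then (1:ℝ) else 0) = 0
          rw [if_neg hb]
        simp [this]
  | succ m ih =>
      have e1 : m + 1 + n = (m + n) + 1 := by omega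
      rw [e1, qrec hprob]
      calc ∑' a : Γ, ENNReal.ofReal (μ a) * ENNReal.ofReal (convPow μ (m+n) (a⁻¹ * g))
          = ∑' a : Γ, ∑' h : Γ, ENNReal.ofReal (μ a) *
              (ENNReal.ofReal (convPow μ m h) * ENNReal.ofReal (convPow μ n (h⁻¹ * (a⁻¹ * g)))) := by
            refine tsum_congr fun a => ?_
            rw [ih, ENNReal.tsum_mul_left]
        _ = ∑' a : Γ, ∑' h : Γ, ENNReal.ofReal (μ a) *
              ENNReal.ofReal (convPow μ m (a⁻¹ * h)) * ENNReal.ofReal (convPow μ n (h⁻¹ * g)) := by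
            refine tsum_congr fun a => ?_
            have := (Equiv.mulLeft a).tsum_eq (f := fun h : Γ => ENNReal.ofReal (μ a) *
              ENNReal.ofReal (convPow μ m (a⁻¹ * h)) * ENNReal.ofReal (convPow μ n (h⁻¹ * g)))
            rw [← this]
            refine tsum_congr fun h => ?_
            simp [mul_assoc, mul_inv_rev]
        _ = ∑' h : Γ, (∑' a : Γ, ENNReal.ofReal (μ a) * ENNReal.ofReal (convPow μ m (a⁻¹ * h)))
              * ENNReal.ofReal (convPow μ n (h⁻¹ * g)) := by
            rw [ENNReal.tsum_comm]
            exact tsum_congr fun h => (ENNReal.tsum_mul_right (a := ENNReal.ofReal (convPow μ n (h⁻¹ * g)))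
              (f := fun a : Γ => ENNReal.ofReal (μ a) * ENNReal.ofReal (convPow μ m (a⁻¹ * h))))
        _ = ∑' h : Γ, ENNReal.ofReal (convPow μ (m+1) h) * ENNReal.ofReal (convPow μ n (h⁻¹ * g)) := by
            exact tsum_congr fun h => by rw [← qrec hprob]

lemma chapman_term_le (m n : ℕ) (g h : Γ) :
    convPow μ m h * convPow μ n (h⁻¹ * g) ≤ convPow μ (m+n) g := by
  have h1 := ENNReal.le_tsum (f := fun h : Γ => ENNReal.ofReal (convPow μ m h) *
    ENNReal.ofReal (convPow μ n (h⁻¹ * g))) h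
  rw [← qchapman hprob, ← ENNReal.ofReal_mul (convPow_nonneg hprob m h)] at h1
  exact (ENNReal.ofReal_le_ofReal_iff (convPow_nonneg hprob _ _)).1 h1

lemma exists_convPow_pos (hadm : Subsemigroup.closure {g : Γ | 0 < μ g} = ⊤) (g : Γ) :
    ∃ m : ℕ, 0 < convPow μ m g := by
  let S : Subsemigroup Γ :=
    { carrier := {g : Γ | ∃ m : ℕ, 0 < convPow μ m g}
      mul_mem' := by
        rintro a b ⟨m, hm⟩ ⟨n, hn⟩
        have hb : 0 < convPow μ n (a⁻¹ * (a * b)) := by simpa using hn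
        refine ⟨m + n, lt_of_lt_of_le (mul_pos hm hb) (chapman_term_le hprob m n (a * b) a)⟩ }
  have hsub : {g : Γ | 0 < μ g} ⊆ S := by
    intro g hg
    exact ⟨1, by rw [convPow_one_eq hprob]; exact hg⟩
  have hle : Subsemigroup.closure {g : Γ | 0 < μ g} ≤ S := Subsemigroup.closure_le.2 hsub
  rw [hadm] at hle
  exact hle (Subsemigroup.mem_top g)

omit hprob in
lemma tsum_ofReal_transfer {ι : Type*} {f : ι → ℝ} (hf : ∀ i, 0 ≤ f i) {T : ℝ≥0∞}
    (hT : ∑' i, ENNReal.ofReal (f i) = T) (hfin : T ≠ ⊤) :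
    Summable f ∧ ENNReal.ofReal (∑' i, f i) = T := by
  have hs : Summable f := by
    have h1 := ENNReal.summable_toReal (f := fun i => ENNReal.ofReal (f i))
      (by rw [hT]; exact hfin)
    refine (summable_congr fun i => ?_).1 h1
    exact ENNReal.toReal_ofReal (hf i)
  exact ⟨hs, by rw [← hT, ENNReal.ofReal_tsum_of_nonneg hf hs]⟩

omit hprob in
lemma choose_le_pow_succ (s n : ℕ) : (n+s).choose s ≤ (n+1)^s := by
  induction s with
  | zero => simp
  | succ s ih =>
      have key : ((n+s)+1) * (n+s).choose s = (n+s+1).choose (s+1) * (s+1) :=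
        Nat.add_one_mul_choose_eq (n+s) s
      have hns : n+s+1 ≤ (s+1)*(n+1) := by
        have : (s+1)*(n+1) = s*n+(n+s+1) := by ring
        omega
      have h2 : (n+s+1).choose (s+1) * (s+1) ≤ (n+1)^(s+1) * (s+1) := by
        calc (n+s+1).choose (s+1) * (s+1) = ((n+s)+1) * (n+s).choose s := key.symm
          _ ≤ ((s+1)*(n+1)) * (n+1)^s := Nat.mul_le_mul hns ih
          _ = (n+1)^(s+1) * (s+1) := by ring
      have h3 := Nat.le_of_mul_le_mul_right h2 (Nat.succ_pos s)
      have : n + (s+1) = n + s + 1 := by omega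
      rw [this]
      exact h3

omit hprob in
lemma summable_pow_succ_mul_geom {t : ℝ} (ht0 : 0 ≤ t) (ht : t < 1) (s : ℕ) :
    Summable fun n : ℕ => ((n:ℝ)+1)^s * t^n := by
  rcases eq_or_lt_of_le ht0 with h|h
  · refine summable_of_ne_finset_zero (s := {0}) fun n hn => ?_
    have hn0 : n ≠ 0 := by simpa using hn
    rw [← h, zero_pow hn0, mul_zero]
  · have hgeom := summable_pow_mul_geometric_of_norm_lt_one (R := ℝ) s
      (r := t) (by rwa [Real.norm_eq_abs, abs_of_nonneg ht0])
    have h2 : Summable (fun n : ℕ => (((n+1 : ℕ)):ℝ)^s * t^(n+1)) := by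
      have := hgeom.comp_injective (fun a b hab => by simpa using hab :
        Function.Injective (fun n : ℕ => n + 1))
      refine (summable_congr fun n => ?_).1 this
      simp only [Function.comp_apply]
    have h3 := h2.mul_left t⁻¹
    refine (summable_congr fun n => ?_).1 h3
    push_cast
    rw [pow_succ]
    field_simp

lemma summable_choose_mul (hadm : Subsemigroup.closure {g : Γ | 0 < μ g} = ⊤)
    (s : ℕ) (x y : Γ) {ρ : ℝ} (h0 : 0 ≤ ρ) (hρ : ρ < greenRadius μ) :
    Summable fun n : ℕ => ((n+s).choose s : ℝ) * stepProb μ n x y * ρ^n := by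
  classical
  have hRpos : 0 < greenRadius μ := lt_of_le_of_lt h0 hρ
  set L := Filter.limsup (fun n : ℕ => (convPow μ n 1) ^ ((n : ℝ)⁻¹)) Filter.atTop with hLdef
  have hRL : greenRadius μ = L⁻¹ := rfl
  have hLpos : 0 < L := by
    by_contra hc
    push_neg at hc
    have : greenRadius μ ≤ 0 := by rw [hRL]; exact inv_nonpos.2 hc
    linarith
  set ρ' := (ρ + greenRadius μ)/2 with hρ'def
  have hρ'1 : ρ < ρ' := by rw [hρ'def]; linarith
  have hρ'2 : ρ' < greenRadius μ := by rw [hρ'def]; linarith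
  have hρ'pos : 0 < ρ' := lt_of_le_of_lt h0 hρ'1
  have hLlt : L < ρ'⁻¹ := by
    have h1 : ρ' < L⁻¹ := by rw [← hRL]; exact hρ'2
    have h2 : L * ρ' < 1 := by
      have := mul_lt_mul_of_pos_left h1 hLpos
      rwa [mul_inv_cancel₀ (ne_of_gt hLpos)] at this
    calc L = L * ρ' * ρ'⁻¹ := by field_simp
      _ < 1 * ρ'⁻¹ := mul_lt_mul_of_pos_right h2 (inv_pos.2 hρ'pos)
      _ = ρ'⁻¹ := one_mul _
  have hbdd : Filter.IsBoundedUnder (· ≤ ·) Filter.atTop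
      (fun n : ℕ => (convPow μ n 1) ^ ((n : ℝ)⁻¹)) := by
    refine isBoundedUnder_of ⟨1, fun n => ?_⟩
    exact Real.rpow_le_one (convPow_nonneg hprob n 1) (convPow_le_one hprob n 1)
      (by positivity)
  have hev : ∀ᶠ n in Filter.atTop, (convPow μ n 1) ^ ((n:ℝ)⁻¹) < ρ'⁻¹ :=
    eventually_lt_of_limsup_lt hLlt hbdd
  have hev2 : ∀ᶠ n in Filter.atTop, convPow μ n 1 ≤ (ρ'⁻¹)^n := by
    filter_upwards [hev, Filter.eventually_ge_atTop 1] with n hn hn1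
    have hrw : ((convPow μ n 1) ^ ((n:ℝ)⁻¹))^n = convPow μ n 1 :=
      Real.rpow_inv_natCast_pow (convPow_nonneg hprob n 1) (by omega)
    calc convPow μ n 1 = ((convPow μ n 1) ^ ((n:ℝ)⁻¹))^n := hrw.symm
      _ ≤ (ρ'⁻¹)^n := pow_le_pow_left₀
          (Real.rpow_nonneg (convPow_nonneg hprob n 1) _) (le_of_lt hn) n
  obtain ⟨N, hN⟩ := Filter.eventually_atTop.1 hev2
  obtain ⟨m, hm⟩ := exists_convPow_pos hprob hadm (y⁻¹ * x)
  set c := convPow μ m (y⁻¹ * x) with hcdef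
  have hstep : ∀ n, stepProb μ n x y * c ≤ convPow μ (n+m) 1 := by
    intro n
    have := chapman_term_le hprob n m 1 (x⁻¹ * y)
    simpa [stepProb, mul_inv_rev, hcdef] using this
  set t := ρ / ρ' with htdef
  have ht0 : 0 ≤ t := div_nonneg h0 (le_of_lt hρ'pos)
  have ht1 : t < 1 := (div_lt_one hρ'pos).2 hρ'1
  have haux := summable_pow_succ_mul_geom ht0 ht1 s
  have haux2 : Summable (fun n : ℕ => (((n:ℝ)+N)+1)^s * t^(n+N)) := by
    have := haux.comp_injective
      (fun a b hab => by simpa using hab : Function.Injective fun n : ℕ => n + N)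
    refine (summable_congr fun n => ?_).1 this
    simp only [Function.comp]
    push_cast
    ring_nf
  set K := c⁻¹ * (ρ'⁻¹)^m with hKdef
  have hsum2 : Summable (fun n : ℕ => K * ((((n:ℝ)+N)+1)^s * t^(n+N))) := haux2.mul_left K
  have hbig : Summable (fun n : ℕ => (((n+N)+s).choose s : ℝ) * stepProb μ (n+N) x y * ρ^(n+N)) := by
    refine Summable.of_nonneg_of_le (fun n => ?_) (fun n => ?_) hsum2
    · exact mul_nonneg (mul_nonneg (by positivity) (convPow_nonneg hprob _ _)) (pow_nonneg h0 _)
    · have hc1 : ((((n+N)+s).choose s : ℕ) : ℝ) ≤ (((n:ℝ)+N)+1)^s := by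
        have := choose_le_pow_succ s (n+N)
        have h' : (((n+N+s).choose s : ℕ) : ℝ) ≤ (((n+N+1)^s : ℕ) : ℝ) := by exact_mod_cast this
        calc (((n+N)+s).choose s : ℝ) ≤ (((n+N+1)^s : ℕ) : ℝ) := h'
          _ = (((n:ℝ)+N)+1)^s := by push_cast; ring
      have ha : stepProb μ (n+N) x y ≤ c⁻¹ * (ρ'⁻¹)^(n+N+m) := by
        have h1 := hstep (n+N)
        have h2 := hN (n+N+m) (by omega)
        have h3 : stepProb μ (n+N) x y * c ≤ (ρ'⁻¹)^(n+N+m) := le_trans h1 h2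
        rw [mul_comm c⁻¹ _, ← div_eq_mul_inv]
        exact (le_div_iff₀ hm).2 h3
      have hsnn : (0:ℝ) ≤ stepProb μ (n+N) x y := convPow_nonneg hprob _ _
      have hrhs : K * ((((n:ℝ)+N)+1)^s * t^(n+N))
          = (((n:ℝ)+N)+1)^s * (c⁻¹ * (ρ'⁻¹)^(n+N+m)) * ρ^(n+N) := by
        rw [htdef, hKdef, div_pow, pow_add (ρ'⁻¹) (n+N) m, div_eq_mul_inv, ← inv_pow]
        ring
      rw [hrhs]
      have step1 : (((n+N)+s).choose s : ℝ) * stepProb μ (n+N) x y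
          ≤ (((n:ℝ)+N)+1)^s * (c⁻¹ * (ρ'⁻¹)^(n+N+m)) := by
        apply mul_le_mul hc1 ha hsnn (by positivity)
      exact mul_le_mul_of_nonneg_right step1 (pow_nonneg h0 _)
  exact (summable_nat_add_iff N).1 hbig

end RW

section RW2
variable {Γ : Type*} [Group Γ] [Countable Γ] {μ : Γ → ℝ} (hprob : IsProbMeasure μ)

lemma green_nonneg (x y : Γ) {r : ℝ} (h0 : 0 ≤ r) (hp : IsProbMeasure μ) :
    0 ≤ Green μ x y r :=
  tsum_nonneg fun n => mul_nonneg (convPow_nonneg hp n _) (pow_nonneg h0 n)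

lemma greenIter_nonneg (hp : IsProbMeasure μ) (s : ℕ) (x y : Γ) {r : ℝ} (h0 : 0 ≤ r) :
    0 ≤ greenIter μ s x y r := by
  induction s generalizing x y with
  | zero => exact green_nonneg x y h0 hp
  | succ s ih =>
      exact tsum_nonneg fun z => mul_nonneg (green_nonneg x z h0 hp) (ih z y)

include hprob

lemma summable_green (hadm : Subsemigroup.closure {g : Γ | 0 < μ g} = ⊤)
    (x y : Γ) {r : ℝ} (h0 : 0 ≤ r) (hr : r < greenRadius μ) :
    Summable fun n : ℕ => stepProb μ n x y * r^n := by
  have := summable_choose_mul hprob hadm 0 x y h0 hr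
  simpa using this

lemma qgreen (x y : Γ) {r : ℝ} (h0 : 0 ≤ r)
    (hsum : Summable fun n : ℕ => stepProb μ n x y * r^n) :
    ENNReal.ofReal (Green μ x y r)
      = ∑' n : ℕ, ENNReal.ofReal (stepProb μ n x y) * (ENNReal.ofReal r)^n := by
  rw [Green, ENNReal.ofReal_tsum_of_nonneg (f := fun n : ℕ => stepProb μ n x y * r^n)
    (fun n => mul_nonneg (convPow_nonneg hprob _ _) (pow_nonneg h0 n)) hsum]
  exact tsum_congr fun n => by
    rw [ENNReal.ofReal_mul (show 0 ≤ stepProb μ n x y from convPow_nonneg hprob _ _),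
      ENNReal.ofReal_pow h0]

omit hprob in
lemma hockey (s n : ℕ) :
    (∑ l ∈ Finset.range (n+1), (l+s).choose s) = (n+s+1).choose (s+1) := by
  induction n with
  | zero => simp
  | succ n ih =>
      rw [Finset.sum_range_succ, ih]
      have e1 : n+1+s = n+s+1 := by omega
      rw [e1, Nat.choose_succ_succ (n+s+1) s]
      simp only [Nat.succ_eq_add_one]
      omega

lemma qcore (s : ℕ) (x y : Γ) (ρ : ℝ≥0∞) :
    (∑' z : Γ, ((∑' m : ℕ, ENNReal.ofReal (stepProb μ m x z) * ρ^m) *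
      (∑' l : ℕ, (((l+s).choose s : ℕ) : ℝ≥0∞) * ENNReal.ofReal (stepProb μ l z y) * ρ^l)))
    = ∑' n : ℕ, (((n+(s+1)).choose (s+1) : ℕ) : ℝ≥0∞) *
        ENNReal.ofReal (stepProb μ n x y) * ρ^n := by
  classical
  have step1 : ∀ z : Γ,
      ((∑' m : ℕ, ENNReal.ofReal (stepProb μ m x z) * ρ^m) *
      (∑' l : ℕ, (((l+s).choose s : ℕ) : ℝ≥0∞) * ENNReal.ofReal (stepProb μ l z y) * ρ^l))
      = ∑' p : ℕ × ℕ, (((p.2+s).choose s : ℕ) : ℝ≥0∞) * ρ^(p.1+p.2) *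
          (ENNReal.ofReal (stepProb μ p.1 x z) * ENNReal.ofReal (stepProb μ p.2 z y)) := by
    intro z
    rw [← ENNReal.tsum_mul_right]
    rw [show (∑' (m : ℕ), ENNReal.ofReal (stepProb μ m x z) * ρ ^ m *
          ∑' (l : ℕ), (((l+s).choose s : ℕ) : ℝ≥0∞) * ENNReal.ofReal (stepProb μ l z y) * ρ ^ l)
        = ∑' (m : ℕ) (l : ℕ), ENNReal.ofReal (stepProb μ m x z) * ρ ^ m *
            ((((l+s).choose s : ℕ) : ℝ≥0∞) * ENNReal.ofReal (stepProb μ l z y) * ρ ^ l)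
      from tsum_congr fun m => (ENNReal.tsum_mul_left).symm]
    rw [← ENNReal.tsum_prod]
    exact tsum_congr fun p => by rw [pow_add]; ring
  rw [tsum_congr step1, ENNReal.tsum_comm (f := fun z (p : ℕ × ℕ) => _)]
  have step2 : ∀ p : ℕ × ℕ,
      (∑' z : Γ, (((p.2+s).choose s : ℕ) : ℝ≥0∞) * ρ^(p.1+p.2) *
        (ENNReal.ofReal (stepProb μ p.1 x z) * ENNReal.ofReal (stepProb μ p.2 z y)))
      = (((p.2+s).choose s : ℕ) : ℝ≥0∞) * ρ^(p.1+p.2) *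
          ENNReal.ofReal (stepProb μ (p.1+p.2) x y) := by
    rintro ⟨m, l⟩
    rw [ENNReal.tsum_mul_left]
    congr 1
    have hre := (Equiv.mulLeft x).tsum_eq (f := fun z : Γ =>
      ENNReal.ofReal (stepProb μ m x z) * ENNReal.ofReal (stepProb μ l z y))
    rw [← hre]
    simp only [Equiv.coe_mulLeft]
    have : ∀ u : Γ, ENNReal.ofReal (stepProb μ m x (x * u)) *
        ENNReal.ofReal (stepProb μ l (x * u) y)
        = ENNReal.ofReal (convPow μ m u) * ENNReal.ofReal (convPow μ l (u⁻¹ * (x⁻¹ * y))) := by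
      intro u
      simp only [stepProb, inv_mul_cancel_left, mul_inv_rev, mul_assoc]
    rw [tsum_congr this, ← qchapman hprob m l (x⁻¹ * y)]
    rfl
  rw [tsum_congr step2]
  -- now regroup over n = p.1 + p.2
  set G : ℕ × ℕ → ℝ≥0∞ := fun q => if q.2 ≤ q.1 then
    (((q.2+s).choose s : ℕ) : ℝ≥0∞) * ENNReal.ofReal (stepProb μ q.1 x y) * ρ^q.1 else 0
    with hG
  have step3 : ∀ p : ℕ × ℕ,
      (((p.2+s).choose s : ℕ) : ℝ≥0∞) * ρ^(p.1+p.2) * ENNReal.ofReal (stepProb μ (p.1+p.2) x y)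
        = G (p.1+p.2, p.2) := by
    rintro ⟨m, l⟩
    simp only [hG]
    rw [if_pos (by omega : l ≤ m + l)]
    ring
  rw [tsum_congr step3, ENNReal.tsum_prod' (f := fun p : ℕ × ℕ => G (p.1+p.2, p.2)),
    ENNReal.tsum_comm (f := fun m l => G (m+l, l))]
  have step4 : ∀ l : ℕ, (∑' m : ℕ, G (m+l, l)) = ∑' n : ℕ, G (n, l) := by
    intro l
    refine Function.Injective.tsum_eq (g := fun m : ℕ => m + l)
      (fun a b hab => by simpa using hab) (f := fun n => G (n, l)) ?_
    intro n hn
    have hn' : G (n, l) ≠ 0 := Function.mem_support.1 hn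
    rcases le_or_gt l n with hle | hlt
    · exact Set.mem_range.2 ⟨n - l, by omega⟩
    · exfalso
      exact hn' (by simp only [hG]; rw [if_neg (by omega : ¬ l ≤ n)])
  rw [tsum_congr step4, ENNReal.tsum_comm (f := fun l n => G (n, l))]
  refine tsum_congr fun n => ?_
  have step5 : (∑' l : ℕ, G (n, l)) = ∑ l ∈ Finset.range (n+1), G (n, l) := by
    refine tsum_eq_sum fun l hl => ?_
    have : ¬ l ≤ n := by simp at hl; omega
    simp only [hG, if_neg this]
  rw [step5]
  have step6 : ∀ l ∈ Finset.range (n+1), G (n, l)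
      = (((l+s).choose s : ℕ) : ℝ≥0∞) * (ENNReal.ofReal (stepProb μ n x y) * ρ^n) := by
    intro l hl
    have : l ≤ n := by simp at hl; omega
    simp only [hG, if_pos this]; ring
  rw [Finset.sum_congr rfl step6, ← Finset.sum_mul]
  rw [show (∑ l ∈ Finset.range (n+1), (((l+s).choose s : ℕ) : ℝ≥0∞))
      = (((n+(s+1)).choose (s+1) : ℕ) : ℝ≥0∞) by rw [← Nat.cast_sum, hockey, Nat.add_assoc]]
  ring

lemma qsum_eq_ofReal (hadm : Subsemigroup.closure {g : Γ | 0 < μ g} = ⊤) (s : ℕ) (x y : Γ)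
    {r : ℝ} (h0 : 0 ≤ r) (hr : r < greenRadius μ) :
    (∑' n : ℕ, (((n+s).choose s : ℕ) : ℝ≥0∞) * ENNReal.ofReal (stepProb μ n x y)
        * (ENNReal.ofReal r)^n)
      = ENNReal.ofReal (∑' n : ℕ, ((n+s).choose s : ℝ) * stepProb μ n x y * r^n) := by
  rw [ENNReal.ofReal_tsum_of_nonneg
    (f := fun n : ℕ => ((n+s).choose s : ℝ) * stepProb μ n x y * r^n)
    (fun n => mul_nonneg (mul_nonneg (by positivity) (convPow_nonneg hprob _ _))
      (pow_nonneg h0 n))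
    (summable_choose_mul hprob hadm s x y h0 hr)]
  refine tsum_congr fun n => ?_
  rw [ENNReal.ofReal_mul (show (0:ℝ) ≤ ((n+s).choose s : ℝ) * stepProb μ n x y from
      mul_nonneg (by positivity) (convPow_nonneg hprob _ _)),
    ENNReal.ofReal_mul (by positivity : (0:ℝ) ≤ ((n+s).choose s : ℝ)),
    ENNReal.ofReal_pow h0, ENNReal.ofReal_natCast]

lemma greenIter_repr (hadm : Subsemigroup.closure {g : Γ | 0 < μ g} = ⊤) (s : ℕ) :
    ∀ (x y : Γ) {r : ℝ}, 0 ≤ r → r < greenRadius μ →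
    ENNReal.ofReal (greenIter μ s x y r)
      = ∑' n : ℕ, (((n+s).choose s : ℕ) : ℝ≥0∞) * ENNReal.ofReal (stepProb μ n x y)
          * (ENNReal.ofReal r)^n := by
  induction s with
  | zero =>
      intro x y r h0 hr
      have h1 := qgreen hprob x y h0 (summable_green hprob hadm x y h0 hr)
      rw [show greenIter μ 0 x y r = Green μ x y r from rfl, h1]
      exact tsum_congr fun n => by simp
  | succ s ih =>
      intro x y r h0 hr
      have e1 : ∀ z : Γ, ENNReal.ofReal (Green μ x z r * greenIter μ s z y r)
          = (∑' m : ℕ, ENNReal.ofReal (stepProb μ m x z) * (ENNReal.ofReal r)^m) *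
            (∑' l : ℕ, (((l+s).choose s : ℕ) : ℝ≥0∞) * ENNReal.ofReal (stepProb μ l z y)
              * (ENNReal.ofReal r)^l) := by
        intro z
        rw [ENNReal.ofReal_mul (green_nonneg x z h0 hprob),
          qgreen hprob x z h0 (summable_green hprob hadm x z h0 hr), ih z y h0 hr]
      have hJ : (∑' z : Γ, ENNReal.ofReal (Green μ x z r * greenIter μ s z y r))
          = ∑' n : ℕ, (((n+(s+1)).choose (s+1) : ℕ) : ℝ≥0∞) *
              ENNReal.ofReal (stepProb μ n x y) * (ENNReal.ofReal r)^n := by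
        rw [tsum_congr e1]
        exact qcore hprob s x y (ENNReal.ofReal r)
      have hfin : (∑' n : ℕ, (((n+(s+1)).choose (s+1) : ℕ) : ℝ≥0∞) *
          ENNReal.ofReal (stepProb μ n x y) * (ENNReal.ofReal r)^n) ≠ ⊤ := by
        rw [qsum_eq_ofReal hprob hadm (s+1) x y h0 hr]
        exact ENNReal.ofReal_ne_top
      obtain ⟨hsum, heq⟩ := tsum_ofReal_transfer
        (fun z => mul_nonneg (green_nonneg x z h0 hprob) (greenIter_nonneg hprob s z y h0))
        hJ hfin
      exact heq

lemma greenIter_eq_tsum (hadm : Subsemigroup.closure {g : Γ | 0 < μ g} = ⊤) (s : ℕ) (x y : Γ)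
    {r : ℝ} (h0 : 0 ≤ r) (hr : r < greenRadius μ) :
    greenIter μ s x y r = ∑' n : ℕ, ((n+s).choose s : ℝ) * stepProb μ n x y * r^n := by
  have h1 := greenIter_repr hprob hadm s x y h0 hr
  rw [qsum_eq_ofReal hprob hadm s x y h0 hr] at h1
  exact (ENNReal.ofReal_eq_ofReal_iff (greenIter_nonneg hprob s x y h0)
    (tsum_nonneg fun n => mul_nonneg (mul_nonneg (by positivity) (convPow_nonneg hprob _ _))
      (pow_nonneg h0 n))).1 h1

omit hprob in
lemma hasDerivAt_powser {c : ℕ → ℝ} (hc : ∀ n, 0 ≤ c n) {R' : ℝ}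
    (hs : ∀ ρ : ℝ, 0 ≤ ρ → ρ < R' → Summable fun n : ℕ => ((n:ℝ)+1) * c n * ρ^n)
    (m : ℕ) {x : ℝ} (hx : |x| < R') :
    HasDerivAt (fun y : ℝ => ∑' n : ℕ, c n * y^(n+m+1))
      (∑' n : ℕ, ((n:ℝ)+m+1) * c n * x^(n+m)) x := by
  set r₁ := (|x| + R')/2 with hr₁
  have h1 : |x| < r₁ := by rw [hr₁]; have := abs_nonneg x; linarith
  have h2 : r₁ < R' := by rw [hr₁]; linarith
  have h3 : 0 < r₁ := lt_of_le_of_lt (abs_nonneg x) h1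
  set u : ℕ → ℝ := fun n => ((n:ℝ)+m+1) * c n * r₁^(n+m) with hu
  have husum : Summable u := by
    have base := hs r₁ (le_of_lt h3) h2
    have base2 : Summable fun n : ℕ => ((m:ℝ)+1) * r₁^m * (((n:ℝ)+1) * c n * r₁^n) :=
      base.mul_left _
    refine Summable.of_nonneg_of_le (fun n => ?_) (fun n => ?_) base2
    · exact mul_nonneg (mul_nonneg (by positivity) (hc n)) (pow_nonneg (le_of_lt h3) _)
    · rw [hu]
      have hle : ((n:ℝ)+m+1) ≤ ((m:ℝ)+1) * ((n:ℝ)+1) := by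
        nlinarith [Nat.cast_nonneg (α := ℝ) n, Nat.cast_nonneg (α := ℝ) m]
      calc ((n:ℝ)+m+1) * c n * r₁^(n+m)
          = (((n:ℝ)+m+1)) * (c n * (r₁^n * r₁^m)) := by rw [pow_add]; ring
        _ ≤ (((m:ℝ)+1) * ((n:ℝ)+1)) * (c n * (r₁^n * r₁^m)) := by
            apply mul_le_mul_of_nonneg_right hle
            exact mul_nonneg (hc n) (by positivity)
        _ = ((m:ℝ)+1) * r₁^m * (((n:ℝ)+1) * c n * r₁^n) := by ring
  have hg : ∀ (n : ℕ) (y : ℝ), y ∈ Set.Ioo (-r₁) r₁ →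
      HasDerivAt (fun z : ℝ => c n * z^(n+m+1)) (((n:ℝ)+m+1) * c n * y^(n+m)) y := by
    intro n y _
    have h := hasDerivAt_pow (n+m+1) y
    simp only [Nat.add_sub_cancel] at h
    have h' : HasDerivAt (fun z : ℝ => c n * z^(n+m+1)) (c n * (((n+m+1 : ℕ):ℝ) * y^(n+m))) y :=
      h.const_mul (c n)
    convert h' using 1
    push_cast
    ring
  have hbound : ∀ (n : ℕ) (y : ℝ), y ∈ Set.Ioo (-r₁) r₁ →
      ‖((n:ℝ)+m+1) * c n * y^(n+m)‖ ≤ u n := by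
    intro n y hy
    rw [Set.mem_Ioo] at hy
    have hyabs : |y| ≤ r₁ := by rw [abs_le]; constructor <;> linarith [hy.1, hy.2]
    rw [Real.norm_eq_abs, abs_mul, abs_mul, abs_pow,
      abs_of_nonneg (by positivity : (0:ℝ) ≤ (n:ℝ)+m+1), abs_of_nonneg (hc n)]
    exact mul_le_mul_of_nonneg_left (pow_le_pow_left₀ (abs_nonneg y) hyabs (n+m))
      (mul_nonneg (by positivity) (hc n))
  have hsum0 : Summable fun n : ℕ => c n * (0:ℝ)^(n+m+1) := by
    have hz : (fun n : ℕ => c n * (0:ℝ)^(n+m+1)) = fun _ => (0:ℝ) :=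
      funext fun n => by rw [zero_pow (by omega : n+m+1 ≠ 0), mul_zero]
    rw [hz]; exact summable_zero
  have h0mem : (0:ℝ) ∈ Set.Ioo (-r₁) r₁ := by
    rw [Set.mem_Ioo]; exact ⟨neg_lt_zero.2 h3, h3⟩
  have hxmem : x ∈ Set.Ioo (-r₁) r₁ := by
    rw [Set.mem_Ioo]; exact abs_lt.1 h1
  exact hasDerivAt_tsum_of_isPreconnected husum isOpen_Ioo (convex_Ioo _ _).isPreconnected
    hg hbound h0mem hsum0 hxmem

omit hprob in
lemma Bsucc (j n : ℕ) :
    (n+j+2) * ((j+1).factorial * ((n+j+1).choose (j+1)))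
      = (j+2).factorial * ((n+j+2).choose (j+2)) := by
  have key := Nat.add_one_mul_choose_eq (n+j+1) (j+1)
  calc (n+j+2) * ((j+1).factorial * ((n+j+1).choose (j+1)))
      = (j+1).factorial * ((n+j+1+1) * ((n+j+1).choose (j+1))) := by ring
    _ = (j+1).factorial * ((n+j+1+1).choose (j+1+1) * (j+1+1)) := by rw [key]
    _ = ((j+2) * (j+1).factorial) * ((n+j+2).choose (j+2)) := by ring_nf
    _ = (j+2).factorial * ((n+j+2).choose (j+2)) := by rw [Nat.factorial_succ (j+1)]

lemma greenF_repr (hadm : Subsemigroup.closure {g : Γ | 0 < μ g} = ⊤) (x y : Γ) (j : ℕ) :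
    ∀ {r : ℝ}, |r| < greenRadius μ →
    greenF μ x y j r
      = ∑' n : ℕ, (((j+1).factorial * ((n+j+1).choose (j+1)) : ℕ) : ℝ)
          * stepProb μ n x y * r^(n+j) := by
  induction j with
  | zero =>
      intro r hr
      have hfun : (fun t : ℝ => t * Green μ x y t)
          = fun t : ℝ => ∑' n : ℕ, stepProb μ n x y * t^(n+0+1) := by
        funext t
        rw [Green, ← tsum_mul_left]
        exact tsum_congr fun n => by ring
      have hsder : ∀ ρ : ℝ, 0 ≤ ρ → ρ < greenRadius μ →
          Summable fun n : ℕ => ((n:ℝ)+1) * stepProb μ n x y * ρ^n := by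
        intro ρ h0 hρ
        have := summable_choose_mul hprob hadm 1 x y h0 hρ
        refine (summable_congr fun n => ?_).1 this
        rw [Nat.choose_one_right]
        push_cast
        ring
      have hd := hasDerivAt_powser (c := fun n => stepProb μ n x y)
        (fun n => convPow_nonneg hprob n _) hsder 0 hr
      rw [show greenF μ x y 0 = deriv (fun t : ℝ => t * Green μ x y t) from rfl, hfun,
        hd.deriv]
      refine tsum_congr fun n => ?_
      rw [Nat.factorial_one, one_mul, Nat.choose_one_right]
      push_cast
      ring
  | succ j ih =>
      intro r hr
      have hev : (fun t : ℝ => t^2 * greenF μ x y j t) =ᶠ[nhds r]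
          (fun t : ℝ => ∑' n : ℕ, (((j+1).factorial * ((n+j+1).choose (j+1)) : ℕ) : ℝ)
            * stepProb μ n x y * t^(n+(j+1)+1)) := by
        have hmem : Set.Ioo (-(greenRadius μ)) (greenRadius μ) ∈ nhds r :=
          isOpen_Ioo.mem_nhds (by rw [Set.mem_Ioo]; exact abs_lt.1 hr)
        filter_upwards [hmem] with t ht
        rw [Set.mem_Ioo] at ht
        have habs : |t| < greenRadius μ := abs_lt.2 ht
        rw [ih habs, ← tsum_mul_left]
        refine tsum_congr fun n => ?_
        rw [show n+(j+1)+1 = (n+j)+2 from by omega, pow_add]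
        ring
      have hsder : ∀ ρ : ℝ, 0 ≤ ρ → ρ < greenRadius μ →
          Summable fun n : ℕ => ((n:ℝ)+1) *
            ((((j+1).factorial * ((n+j+1).choose (j+1)) : ℕ) : ℝ) * stepProb μ n x y) * ρ^n := by
        intro ρ h0 hρ
        have base := summable_choose_mul hprob hadm (j+2) x y h0 hρ
        have base2 := base.mul_left (((j+2).factorial : ℕ) : ℝ)
        refine Summable.of_nonneg_of_le (fun n => ?_) (fun n => ?_) base2
        · exact mul_nonneg (mul_nonneg (by positivity)
            (mul_nonneg (by positivity) (convPow_nonneg hprob n _))) (pow_nonneg h0 n)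
        · have hnat : (n+1) * ((j+1).factorial * ((n+j+1).choose (j+1)))
              ≤ (j+2).factorial * ((n+j+2).choose (j+2)) := by
            calc (n+1) * ((j+1).factorial * ((n+j+1).choose (j+1)))
                ≤ (n+j+2) * ((j+1).factorial * ((n+j+1).choose (j+1))) :=
                  Nat.mul_le_mul_right _ (by omega)
              _ = (j+2).factorial * ((n+j+2).choose (j+2)) := Bsucc j n
          have hcast : ((n:ℝ)+1) * (((j+1).factorial * ((n+j+1).choose (j+1)) : ℕ) : ℝ)
              ≤ (((j+2).factorial : ℕ) : ℝ) * (((n+j+2).choose (j+2) : ℕ) : ℝ) := by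
            rw [show ((n:ℝ)+1) = ((n+1 : ℕ) : ℝ) by push_cast; ring,
              ← Nat.cast_mul, ← Nat.cast_mul]
            exact_mod_cast hnat
          have hterm : ((n:ℝ)+1) *
              ((((j+1).factorial * ((n+j+1).choose (j+1)) : ℕ) : ℝ) * stepProb μ n x y) * ρ^n
              = (((n:ℝ)+1) * (((j+1).factorial * ((n+j+1).choose (j+1)) : ℕ) : ℝ))
                  * (stepProb μ n x y * ρ^n) := by ring
          rw [hterm]
          have hrhs : (((j+2).factorial : ℕ) : ℝ) * (((n+(j+2)).choose (j+2) : ℕ) : ℝ)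
                * (stepProb μ n x y * ρ^n)
              = (((j+2).factorial : ℕ) : ℝ) *
                  ((((n+(j+2)).choose (j+2) : ℕ) : ℝ) * stepProb μ n x y * ρ^n) := by ring
          calc (((n:ℝ)+1) * (((j+1).factorial * ((n+j+1).choose (j+1)) : ℕ) : ℝ))
                * (stepProb μ n x y * ρ^n)
              ≤ ((((j+2).factorial : ℕ) : ℝ) * (((n+(j+2)).choose (j+2) : ℕ) : ℝ))
                * (stepProb μ n x y * ρ^n) := by
                apply mul_le_mul_of_nonneg_right _ (mul_nonneg (convPow_nonneg hprob n _)
                  (pow_nonneg h0 n))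
                exact hcast
            _ = (((j+2).factorial : ℕ) : ℝ) *
                  ((((n+(j+2)).choose (j+2) : ℕ) : ℝ) * stepProb μ n x y * ρ^n) := hrhs
      have hd := hasDerivAt_powser
        (c := fun n => (((j+1).factorial * ((n+j+1).choose (j+1)) : ℕ) : ℝ) * stepProb μ n x y)
        (fun n => mul_nonneg (by positivity) (convPow_nonneg hprob n _)) hsder (j+1) hr
      rw [show greenF μ x y (j+1) = deriv (fun t : ℝ => t^2 * greenF μ x y j t) from rfl,
        Filter.EventuallyEq.deriv_eq hev, hd.deriv]
      refine tsum_congr fun n => ?_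
      beta_reduce
      have hnat2 : (n+j+2) * ((j+1).factorial * ((n+j+1).choose (j+1)))
          = ((j+1)+1).factorial * ((n+(j+1)+1).choose ((j+1)+1)) := by
        rw [show n+(j+1)+1 = n+j+2 from by omega, show (j+1)+1 = j+2 from by omega]
        exact Bsucc j n
      have hcast2 : ((n:ℝ) + (((j+1):ℕ):ℝ) + 1)
            * (((j+1).factorial * ((n+j+1).choose (j+1)) : ℕ) : ℝ)
          = ((((j+1)+1).factorial * ((n+(j+1)+1).choose ((j+1)+1)) : ℕ) : ℝ) := by
        rw [show ((n:ℝ) + (((j+1):ℕ):ℝ) + 1) = ((n+j+2 : ℕ) : ℝ) by push_cast; ring,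
          ← Nat.cast_mul, hnat2]
      rw [show ((n:ℝ) + (((j+1):ℕ):ℝ) + 1) *
            ((((j+1).factorial * ((n+j+1).choose (j+1)) : ℕ) : ℝ) * stepProb μ n x y)
            * r^(n+(j+1))
          = (((n:ℝ) + (((j+1):ℕ):ℝ) + 1)
              * (((j+1).factorial * ((n+j+1).choose (j+1)) : ℕ) : ℝ))
              * stepProb μ n x y * r^(n+(j+1)) from by ring, hcast2]

end RW2

/-- For every `k ≥ 1`, all `x, y ∈ Γ` and all `0 < r < R`,
`F_k(x,y|r) = k! · r^{k-1} · I^{(k)}(x,y|r)`. -/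
theorem greenF_eq_factorial_mul_greenIter
    {Γ : Type*} [Group Γ] [Countable Γ] (μ : Γ → ℝ)
    (hprob : IsProbMeasure μ) (hadm : Admissible μ) :
    ∀ k : ℕ, 1 ≤ k → ∀ x y : Γ, ∀ r : ℝ, 0 < r → r < greenRadius μ →
      greenF μ x y (k - 1) r =
        (Nat.factorial k : ℝ) * r ^ (k - 1) * greenIter μ k x y r := by
  intro k hk x y r hr0 hrR
  have hadm' : Subsemigroup.closure {g : Γ | 0 < μ g} = ⊤ := hadm
  obtain ⟨j, rfl⟩ : ∃ j, k = j + 1 := ⟨k - 1, by omega⟩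
  have h1 : |r| < greenRadius μ := by rw [abs_of_pos hr0]; exact hrR
  rw [show j + 1 - 1 = j from by omega]
  rw [greenF_repr hprob hadm' x y j h1,
    greenIter_eq_tsum hprob hadm' (j+1) x y (le_of_lt hr0) hrR,
    show ((j+1).factorial : ℝ) * r ^ j *
        (∑' n : ℕ, ((n+(j+1)).choose (j+1) : ℝ) * stepProb μ n x y * r^n)
      = ∑' n : ℕ, ((j+1).factorial : ℝ) * r ^ j *
          (((n+(j+1)).choose (j+1) : ℝ) * stepProb μ n x y * r^n) from
      (tsum_mul_left (a := ((j+1).factorial : ℝ) * r ^ j)).symm]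
  refine tsum_congr fun n => ?_
  rw [pow_add]
  push_cast
  ring
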